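/- arXiv:1608.05591 — 5 statements merged into one kernel-verified Lean document; each statement's English description precedes it below -/
import Mathlib

section
/- Let Ω₀ be a bounded self-adjoint operator and B₀ a Hilbert–Schmidt operator on a complex Hilbert space h, both real symmetric (Ω₀ = Ω₀ᵗ, B₀ = B₀ᵗ = B̄₀), satisfying Ω₀ + 2B₀ ≥ μ·1 and Ω₀ − 2B₀ ≥ μ·1 for some μ > 0. Then Ω₀ ≥ μ·1 > 0 (in particular Ω₀ is positive and invertible), and Ω₀ ≥ 4 B₀ Ω₀⁻¹ B₀ + μ·1. -/
open scoped InnerProductSpace ComplexConjugate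

/-!
Testing `Ω + 2B ≥ μ` on `ψ + φ` and `Ω - 2B ≥ μ` on `ψ - φ` and adding shows that the block
operator `[[Ω, 2B], [2B, Ω]]` is `≥ μ` on `h ⊕ h`; here `B` is symmetric because it is both real
and transpose-symmetric. The diagonal of the block inequality gives `Ω ≥ μ`, so `Ω` is invertible,
and minimising the block form over `φ`, attained at `φ = -2 Ω⁻¹ B ψ`, gives the Schur complement
bound `Ω - 4 B Ω⁻¹ B ≥ μ`.
-/

section

open RCLike

variable {𝕜 H : Type*} [RCLike 𝕜] [NormedAddCommGroup H] [InnerProductSpace 𝕜 H]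

theorem isSymmetric_of_eq_transpose_of_eq_conj (J : H → H) (hJJ : ∀ x, J (J x) = x)
    (T : H →ₗ[𝕜] H) (ht : ∀ f g, ⟪f, T g⟫_𝕜 = ⟪J g, T (J f)⟫_𝕜)
    (hbar : ∀ f g, ⟪f, T g⟫_𝕜 = conj ⟪J f, T (J g)⟫_𝕜) : T.IsSymmetric := by
  intro f g
  have hJt := ht (J f) (J g)
  rw [hJJ, hJJ] at hJt
  rw [hbar f g, hJt, inner_conj_symm]

theorem isUnit_of_forall_le_re_inner_map_self [CompleteSpace H] {μ : ℝ} (hμ : 0 < μ)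
    (T : H →L[𝕜] H) (h : ∀ x, μ * ‖x‖ ^ 2 ≤ re ⟪x, T x⟫_𝕜) : IsUnit T :=
  T.isUnit_of_forall_le_norm_inner_map (c := ⟨μ, hμ.le⟩) hμ fun x =>
    calc ‖x‖ ^ 2 * μ = μ * ‖x‖ ^ 2 := mul_comm _ _
      _ ≤ re ⟪x, T x⟫_𝕜 := h x
      _ = re ⟪T x, x⟫_𝕜 := inner_re_symm _ _
      _ ≤ ‖⟪T x, x⟫_𝕜‖ := re_le_norm _

section Block

variable {μ : ℝ} (Ω B : H →L[𝕜] H) (hB : (B : H →ₗ[𝕜] H).IsSymmetric)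
include hB

theorem block_form_lower_bound
    (hplus : ∀ ψ, μ * ‖ψ‖ ^ 2 ≤ re (⟪ψ, Ω ψ⟫_𝕜 + 2 * ⟪ψ, B ψ⟫_𝕜))
    (hminus : ∀ ψ, μ * ‖ψ‖ ^ 2 ≤ re (⟪ψ, Ω ψ⟫_𝕜 - 2 * ⟪ψ, B ψ⟫_𝕜)) (ψ φ : H) :
    μ * (‖ψ‖ ^ 2 + ‖φ‖ ^ 2) ≤ re ⟪ψ, Ω ψ⟫_𝕜 + re ⟪φ, Ω φ⟫_𝕜 + 4 * re ⟪ψ, B φ⟫_𝕜 := by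
  have hp := hplus (ψ + φ)
  have hm := hminus (ψ - φ)
  have hBφψ : re ⟪φ, B ψ⟫_𝕜 = re ⟪ψ, B φ⟫_𝕜 := by
    rw [inner_re_symm, ← ContinuousLinearMap.coe_coe, ← hB, ContinuousLinearMap.coe_coe]
  have hpar := congrArg (μ * ·) (parallelogram_law_with_norm 𝕜 ψ φ)
  simp only [map_add, map_sub, inner_add_left, inner_add_right, inner_sub_left,
    inner_sub_right, two_mul] at hp hm
  linarith

theorem schur_complement_lower_bound (hμ : 0 ≤ μ) (Ωinv : H →L[𝕜] H) (hΩ : Ω * Ωinv = 1)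
    (hblock : ∀ ψ φ, μ * (‖ψ‖ ^ 2 + ‖φ‖ ^ 2) ≤
      re ⟪ψ, Ω ψ⟫_𝕜 + re ⟪φ, Ω φ⟫_𝕜 + 4 * re ⟪ψ, B φ⟫_𝕜) (ψ : H) :
    4 * re ⟪B ψ, Ωinv (B ψ)⟫_𝕜 + μ * ‖ψ‖ ^ 2 ≤ re ⟪ψ, Ω ψ⟫_𝕜 := by
  set v := Ωinv (B ψ)
  have hΩv : Ω v = B ψ := congr($hΩ (B ψ))
  have hφ := hblock ψ ((-2 : 𝕜) • v)
  have hΩφ : re ⟪(-2 : 𝕜) • v, Ω ((-2 : 𝕜) • v)⟫_𝕜 = 4 * re ⟪B ψ, v⟫_𝕜 := by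
    rw [map_smul, hΩv, inner_smul_left, inner_smul_right, inner_re_symm (B ψ)]
    norm_num [← mul_assoc]
  have hBφ : re ⟪ψ, B ((-2 : 𝕜) • v)⟫_𝕜 = -2 * re ⟪B ψ, v⟫_𝕜 := by
    rw [← ContinuousLinearMap.coe_coe, ← hB, inner_smul_right]
    simp
  rw [hΩφ, hBφ] at hφ
  linarith [mul_nonneg hμ (sq_nonneg ‖(-2 : 𝕜) • v‖)]

end Block

end

theorem stmt_0_general {H : Type*} [NormedAddCommGroup H] [InnerProductSpace ℂ H] [CompleteSpace H]
    (J : H → H)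
    (hJJ : ∀ x, J (J x) = x)
    (Ω B : H →L[ℂ] H) (μ : ℝ) (hμ : 0 < μ)
    (hBt : ∀ f g, ⟪f, B g⟫_ℂ = ⟪J g, B (J f)⟫_ℂ)
    (hBbar : ∀ f g, ⟪f, B g⟫_ℂ = conj ⟪J f, B (J g)⟫_ℂ)
    (hplus : ∀ ψ : H, μ * ‖ψ‖ ^ 2 ≤ (⟪ψ, Ω ψ⟫_ℂ + 2 * ⟪ψ, B ψ⟫_ℂ).re)
    (hminus : ∀ ψ : H, μ * ‖ψ‖ ^ 2 ≤ (⟪ψ, Ω ψ⟫_ℂ - 2 * ⟪ψ, B ψ⟫_ℂ).re) :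
    (∀ ψ : H, μ * ‖ψ‖ ^ 2 ≤ (⟪ψ, Ω ψ⟫_ℂ).re) ∧
      ∃ Ωinv : H →L[ℂ] H, Ω * Ωinv = 1 ∧ Ωinv * Ω = 1 ∧
        ∀ ψ : H, 4 * (⟪B ψ, Ωinv (B ψ)⟫_ℂ).re + μ * ‖ψ‖ ^ 2 ≤ (⟪ψ, Ω ψ⟫_ℂ).re := by
  have hB : (B : H →ₗ[ℂ] H).IsSymmetric :=
    isSymmetric_of_eq_transpose_of_eq_conj J hJJ _ hBt hBbar
  have hblock := block_form_lower_bound Ω B hB hplus hminus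
  have hcoercive : ∀ ψ : H, μ * ‖ψ‖ ^ 2 ≤ (⟪ψ, Ω ψ⟫_ℂ).re := fun ψ => by
    simpa using hblock ψ 0
  have hΩ := isUnit_of_forall_le_re_inner_map_self hμ Ω hcoercive
  exact ⟨hcoercive, ↑hΩ.unit⁻¹, hΩ.mul_val_inv, hΩ.val_inv_mul,
    schur_complement_lower_bound Ω B hB hμ.le _ hΩ.mul_val_inv hblock⟩

/-- Friedrichs–Berezin assumptions imply Conditions A1, A2 and A6:
if `Ω` is a bounded self-adjoint operator and `B` a Hilbert–Schmidt operator, both real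
symmetric with respect to a conjugation `J`, and `Ω ± 2B ≥ μ·1` with `μ > 0`, then
`Ω ≥ μ·1 > 0` (in particular `Ω` is invertible) and `Ω ≥ 4 B Ω⁻¹ B + μ·1`. -/
theorem stmt_0 {H ι : Type*} [NormedAddCommGroup H] [InnerProductSpace ℂ H] [CompleteSpace H]
    (J : H → H)
    (hJadd : ∀ x y, J (x + y) = J x + J y)
    (hJsmul : ∀ (z : ℂ) (x : H), J (z • x) = conj z • J x)
    (hJJ : ∀ x, J (J x) = x)
    (hJinner : ∀ x y, ⟪J x, J y⟫_ℂ = ⟪y, x⟫_ℂ)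
    (e : HilbertBasis ι ℂ H)
    (Ω B : H →L[ℂ] H) (μ : ℝ) (hμ : 0 < μ)
    (hΩsa : IsSelfAdjoint Ω)
    (hΩt : ∀ f g, ⟪f, Ω g⟫_ℂ = ⟪J g, Ω (J f)⟫_ℂ)
    (hBt : ∀ f g, ⟪f, B g⟫_ℂ = ⟪J g, B (J f)⟫_ℂ)
    (hBbar : ∀ f g, ⟪f, B g⟫_ℂ = conj ⟪J f, B (J g)⟫_ℂ)
    (hHS : Summable fun k => ‖B (e k)‖ ^ 2)
    (hplus : ∀ ψ : H, μ * ‖ψ‖ ^ 2 ≤ (⟪ψ, Ω ψ⟫_ℂ + 2 * ⟪ψ, B ψ⟫_ℂ).re)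
    (hminus : ∀ ψ : H, μ * ‖ψ‖ ^ 2 ≤ (⟪ψ, Ω ψ⟫_ℂ - 2 * ⟪ψ, B ψ⟫_ℂ).re) :
    (∀ ψ : H, μ * ‖ψ‖ ^ 2 ≤ (⟪ψ, Ω ψ⟫_ℂ).re) ∧
      ∃ Ωinv : H →L[ℂ] H, Ω * Ωinv = 1 ∧ Ωinv * Ω = 1 ∧
        ∀ ψ : H, 4 * (⟪B ψ, Ωinv (B ψ)⟫_ℂ).re + μ * ‖ψ‖ ^ 2 ≤ (⟪ψ, Ω ψ⟫_ℂ).re :=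
  stmt_0_general J hJJ Ω B μ hμ hBt hBbar hplus hminus
end

section
/- Let Ω₀ and B₀ be bounded self-adjoint operators on a Hilbert space h with B₀ Hilbert–Schmidt, satisfying Ω₀ + 2B₀ ≥ μ₋·1 and Ω₀ − 2B₀ + P ≥ μ₊·1, where μ₋, μ₊ > 0 and P is the orthogonal projection onto the (finite-dimensional) subspace where Ω₀ = 2B₀ (i.e., P projects onto ker(Ω₀ − 2B₀)). Then Ω₀ ≥ (μ₋/2)·1; in particular Ω₀ is boundedly invertible. -/
open scoped InnerProductSpace

/-!
Write `A = Ω - 2B` and `ψ = Pψ + (ψ - Pψ)`. Since `Pψ ∈ ker A` and `A` is self-adjoint, the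
quadratic form of `A` only sees the component `ψ - Pψ ∈ ker P`, on which the second hypothesis
reads `⟪ψ, Aψ⟫ ≥ μ₊‖ψ‖² ≥ 0`. Hence `Ω - 2B ≥ 0`, and averaging with `Ω + 2B ≥ μ₋` gives
`Ω ≥ μ₋/2`. A coercive operator on a Hilbert space is invertible.
-/

open RCLike

section

variable {𝕜 E : Type*} [RCLike 𝕜] [NormedAddCommGroup E] [InnerProductSpace 𝕜 E]

theorem LinearMap.IsSymmetric.inner_map_add_self_of_apply_eq_zero {A : E →ₗ[𝕜] E}
    (hA : A.IsSymmetric) {x : E} (hx : A x = 0) (y : E) :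
    ⟪A (x + y), x + y⟫_𝕜 = ⟪A y, y⟫_𝕜 := by
  rw [map_add, hx, zero_add, inner_add_right, hA, hx, inner_zero_right, zero_add]

theorem ContinuousLinearMap.isPositive_of_re_inner_nonneg_on_ker {A P : E →L[𝕜] E}
    (hA : (A : E →ₗ[𝕜] E).IsSymmetric) (hP : IsIdempotentElem P)
    (hPA : LinearMap.range (P : E →ₗ[𝕜] E) ≤ LinearMap.ker (A : E →ₗ[𝕜] E))
    (h : ∀ ψ, P ψ = 0 → 0 ≤ re ⟪A ψ, ψ⟫_𝕜) : A.IsPositive := by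
  refine ⟨hA, fun ψ => ?_⟩
  have hAPψ : A (P ψ) = 0 := hPA ⟨ψ, rfl⟩
  have hPcompl : P (ψ - P ψ) = 0 := by
    rw [map_sub, sub_eq_zero]
    exact (DFunLike.congr_fun hP.eq ψ).symm
  have hsplit := hA.inner_map_add_self_of_apply_eq_zero hAPψ (ψ - P ψ)
  rw [add_sub_cancel] at hsplit
  rw [ContinuousLinearMap.reApplyInnerSelf_apply]
  exact hsplit ▸ h _ hPcompl

theorem ContinuousLinearMap.isUnit_of_forall_le_re_inner_map [CompleteSpace E] (f : E →L[𝕜] E)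
    {c : ℝ} (hc : 0 < c) (h : ∀ x, c * ‖x‖ ^ 2 ≤ re ⟪x, f x⟫_𝕜) : IsUnit f := by
  lift c to NNReal using hc.le
  refine isUnit_of_forall_le_norm_inner_map f (by exact_mod_cast hc) fun x => ?_
  calc ‖x‖ ^ 2 * c = c * ‖x‖ ^ 2 := mul_comm _ _
    _ ≤ re ⟪x, f x⟫_𝕜 := h x
    _ ≤ ‖⟪x, f x⟫_𝕜‖ := re_le_norm _
    _ = ‖⟪f x, x⟫_𝕜‖ := norm_inner_symm _ _

end

theorem stmt_1_general {H : Type*} [NormedAddCommGroup H] [InnerProductSpace ℂ H] [CompleteSpace H]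
    (Ω B P : H →L[ℂ] H) (μm μp : ℝ) (hμm : 0 < μm) (hμp : 0 < μp)
    (hΩsa : IsSelfAdjoint Ω) (hBsa : IsSelfAdjoint B)
    (hPidem : P * P = P)
    (hPrange : LinearMap.range (P : H →ₗ[ℂ] H) = LinearMap.ker ((Ω - (2 : ℂ) • B : H →L[ℂ] H) : H →ₗ[ℂ] H))
    (h1 : ∀ ψ : H, μm * ‖ψ‖ ^ 2 ≤ (⟪ψ, Ω ψ⟫_ℂ + 2 * ⟪ψ, B ψ⟫_ℂ).re)
    (h2 : ∀ ψ : H, μp * ‖ψ‖ ^ 2 ≤ (⟪ψ, Ω ψ⟫_ℂ - 2 * ⟪ψ, B ψ⟫_ℂ + ⟪ψ, P ψ⟫_ℂ).re) :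
    (∀ ψ : H, μm / 2 * ‖ψ‖ ^ 2 ≤ (⟪ψ, Ω ψ⟫_ℂ).re) ∧
      ∃ Ωinv : H →L[ℂ] H, Ω * Ωinv = 1 ∧ Ωinv * Ω = 1 := by
  have inner_sub_two_smul (ψ : H) :
      ⟪ψ, (Ω - (2 : ℂ) • B) ψ⟫_ℂ = ⟪ψ, Ω ψ⟫_ℂ - 2 * ⟪ψ, B ψ⟫_ℂ := by
    simp only [sub_apply, smul_apply, inner_sub_right, inner_smul_right]
  have hpos : (Ω - (2 : ℂ) • B).IsPositive := by
    refine ContinuousLinearMap.isPositive_of_re_inner_nonneg_on_ker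
      (hΩsa.sub (.smul (by norm_num) hBsa)).isSymmetric hPidem hPrange.le fun ψ hPψ => ?_
    have hlower := h2 ψ
    rw [hPψ, inner_zero_right, add_zero, ← inner_sub_two_smul] at hlower
    rw [← inner_re_symm]
    exact (by positivity : 0 ≤ μp * ‖ψ‖ ^ 2).trans hlower
  have hcoercive (ψ : H) : μm / 2 * ‖ψ‖ ^ 2 ≤ (⟪ψ, Ω ψ⟫_ℂ).re := by
    have hsub := hpos.re_inner_nonneg_right ψ
    rw [inner_sub_two_smul, RCLike.re_to_complex, Complex.sub_re] at hsub
    have hadd := h1 ψ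
    rw [Complex.add_re] at hadd
    linarith
  exact ⟨hcoercive, isUnit_iff_exists.mp
    (Ω.isUnit_of_forall_le_re_inner_map (half_pos hμm) hcoercive)⟩

/-- Kato–Mugibayashi assumption: if `Ω + 2B ≥ μ₋·1` and `Ω − 2B + P ≥ μ₊·1` with `P` the
orthogonal projection onto the finite-dimensional kernel of `Ω − 2B`, then
`Ω ≥ (μ₋/2)·1`; in particular `Ω` is boundedly invertible. -/
theorem stmt_1 {H ι : Type*} [NormedAddCommGroup H] [InnerProductSpace ℂ H] [CompleteSpace H]
    (e : HilbertBasis ι ℂ H)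
    (Ω B P : H →L[ℂ] H) (μm μp : ℝ) (hμm : 0 < μm) (hμp : 0 < μp)
    (hΩsa : IsSelfAdjoint Ω) (hBsa : IsSelfAdjoint B)
    (hHS : Summable fun k => ‖B (e k)‖ ^ 2)
    (hPsa : IsSelfAdjoint P) (hPidem : P * P = P)
    (hPrange : LinearMap.range (P : H →ₗ[ℂ] H) = LinearMap.ker ((Ω - (2 : ℂ) • B : H →L[ℂ] H) : H →ₗ[ℂ] H))
    (hfd : FiniteDimensional ℂ (LinearMap.ker ((Ω - (2 : ℂ) • B : H →L[ℂ] H) : H →ₗ[ℂ] H)))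
    (h1 : ∀ ψ : H, μm * ‖ψ‖ ^ 2 ≤ (⟪ψ, Ω ψ⟫_ℂ + 2 * ⟪ψ, B ψ⟫_ℂ).re)
    (h2 : ∀ ψ : H, μp * ‖ψ‖ ^ 2 ≤ (⟪ψ, Ω ψ⟫_ℂ - 2 * ⟪ψ, B ψ⟫_ℂ + ⟪ψ, P ψ⟫_ℂ).re) :
    (∀ ψ : H, μm / 2 * ‖ψ‖ ^ 2 ≤ (⟪ψ, Ω ψ⟫_ℂ).re) ∧
      ∃ Ωinv : H →L[ℂ] H, Ω * Ωinv = 1 ∧ Ωinv * Ω = 1 :=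
  stmt_1_general Ω B P μm μp hμm hμp hΩsa hBsa hPidem hPrange h1 h2
end

section
/- Let ω₊⁰ ≥ ω₋⁰ > 0 and b⁰ ∈ ℝ with ω₊⁰ ω₋⁰ = 4(b⁰)², and set δ := ω₊⁰ − ω₋⁰ > 0. Then the functions ω₋(t) = ω₋⁰ δ / (ω₊⁰ e^{4δt} − ω₋⁰), ω₊(t) = ω₊⁰ δ / (ω₊⁰ − ω₋⁰ e^{−4δt}), and b(t)² = (b⁰)² δ² e^{−4tδ} / (ω₊⁰ − ω₋⁰ e^{−4tδ})² solve the system ∂ₜω₋ = −16 b², ∂ₜω₊ = −16 b², ∂ₜb = −2(ω₋+ω₊) b on [0,∞) with the given initial data. -/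
/-- Explicit solution `ω₋(t) = ω₋⁰δ/(ω₊⁰e^{4δt} − ω₋⁰)`. -/
noncomputable def w3m (w m : ℝ) (t : ℝ) : ℝ :=
  m * (w - m) / (w * Real.exp (4 * (w - m) * t) - m)

/-- Explicit solution `ω₊(t) = ω₊⁰δ/(ω₊⁰ − ω₋⁰e^{−4δt})`. -/
noncomputable def w3p (w m : ℝ) (t : ℝ) : ℝ :=
  w * (w - m) / (w - m * Real.exp (-(4 * (w - m) * t)))

/-- Explicit solution `b(t)` with `b(t)² = (b⁰)²δ²e^{−4tδ}/(ω₊⁰ − ω₋⁰e^{−4tδ})²`. -/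
noncomputable def b3 (w m b0 : ℝ) (t : ℝ) : ℝ :=
  b0 * (w - m) * Real.exp (-(2 * (w - m) * t)) / (w - m * Real.exp (-(4 * (w - m) * t)))

/-! Write `δ = ω₊⁰ - ω₋⁰` and `D(t) = ω₊⁰ - ω₋⁰ e^{-4δt}`, the common denominator of `ω₊` and `b`.
Wherever `D(t) ≠ 0` one has `ω₊ - ω₋ = δ`, so `ω₋` and `ω₊` have the same derivative
`-4 ω₊⁰ ω₋⁰ δ² e^{-4δt} / D²`, and the constraint `ω₊⁰ ω₋⁰ = 4 (b⁰)²` is exactly what identifies it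
with `-16 b²`. For `t ≥ 0` and `ω₋⁰ > 0` we have `D(t) ≥ δ > 0`. -/

open Real Filter Topology

section
variable {w m : ℝ}

lemma w3m_zero (hδ : w - m ≠ 0) : w3m w m 0 = m := by
  simp [w3m, hδ]

lemma w3p_zero (hδ : w - m ≠ 0) : w3p w m 0 = w := by
  simp [w3p, hδ]

lemma b3_zero_sq (b0 : ℝ) (hδ : w - m ≠ 0) : b3 w m b0 0 ^ 2 = b0 ^ 2 := by
  simp [b3, hδ]

lemma exp_neg_four_mul_mul (a t : ℝ) : exp (-(4 * a * t)) = exp (-(2 * a * t)) ^ 2 := by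
  rw [← exp_nat_mul]; ring_nf

lemma b3_sq (b0 t : ℝ) :
    b3 w m b0 t ^ 2 = b0 ^ 2 * (w - m) ^ 2 * exp (-(4 * t * (w - m))) /
      (w - m * exp (-(4 * t * (w - m)))) ^ 2 := by
  rw [b3, div_pow, mul_pow, ← exp_neg_four_mul_mul]
  ring_nf

lemma sub_mul_exp_neg_pos (hm : 0 ≤ m) (hδ : 0 < w - m) {t : ℝ} (ht : 0 ≤ t) :
    0 < w - m * exp (-(4 * (w - m) * t)) := by
  have : exp (-(4 * (w - m) * t)) ≤ 1 := exp_le_one_iff.mpr (by nlinarith)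
  nlinarith

lemma w3p_sub_w3m {t : ℝ} (hD : w - m * exp (-(4 * (w - m) * t)) ≠ 0) :
    w3p w m t - w3m w m t = w - m := by
  have hX := exp_pos (4 * (w - m) * t)
  rw [exp_neg] at hD
  have : w * exp (4 * (w - m) * t) - m ≠ 0 := by
    contrapose! hD; field_simp; linarith
  rw [w3p, w3m, exp_neg]
  set X := exp (4 * (w - m) * t)
  rw [div_sub_div _ _ hD this, div_eq_iff (mul_ne_zero hD this)]
  field_simp

lemma hasDerivAt_sub_mul_exp_neg (t : ℝ) :
    HasDerivAt (fun s => w - m * exp (-(4 * (w - m) * s)))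
      (4 * (w - m) * m * exp (-(4 * (w - m) * t))) t := by
  have := (((hasDerivAt_id' t).const_mul (4 * (w - m))).fun_neg.exp.const_mul m).const_sub w
  exact this.congr_deriv (by ring)

lemma hasDerivAt_w3p {t : ℝ} (hD : w - m * exp (-(4 * (w - m) * t)) ≠ 0) :
    HasDerivAt (w3p w m) (-(4 * w * m * (w - m) ^ 2 * exp (-(4 * (w - m) * t)) /
      (w - m * exp (-(4 * (w - m) * t))) ^ 2)) t :=
  ((hasDerivAt_const t (w * (w - m))).div (hasDerivAt_sub_mul_exp_neg t) hD).congr_deriv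
    (by ring)

lemma hasDerivAt_w3m {t f' : ℝ} (hD : w - m * exp (-(4 * (w - m) * t)) ≠ 0)
    (h : HasDerivAt (w3p w m) f' t) : HasDerivAt (w3m w m) f' t := by
  have hD_near : ∀ᶠ s in 𝓝 t, w - m * exp (-(4 * (w - m) * s)) ≠ 0 :=
    (hasDerivAt_sub_mul_exp_neg t).continuousAt.eventually_ne hD
  refine (h.sub_const (w - m)).congr_of_eventuallyEq (hD_near.mono fun s hs => ?_)
  rw [← w3p_sub_w3m hs]
  ring

lemma neg_sixteen_mul_b3_sq {b0 : ℝ} (h : w * m = 4 * b0 ^ 2) (t : ℝ) :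
    -16 * b3 w m b0 t ^ 2 = -(4 * w * m * (w - m) ^ 2 * exp (-(4 * (w - m) * t)) /
      (w - m * exp (-(4 * (w - m) * t))) ^ 2) := by
  rw [b3_sq, show b0 ^ 2 = w * m / 4 by linarith]
  ring_nf

lemma hasDerivAt_b3 (b0 : ℝ) {t : ℝ} (hD : w - m * exp (-(4 * (w - m) * t)) ≠ 0) :
    HasDerivAt (b3 w m b0) (-2 * (w3m w m t + w3p w m t) * b3 w m b0 t) t := by
  have hF := ((hasDerivAt_id' t).const_mul (2 * (w - m))).fun_neg.exp
  refine ((hF.const_mul (b0 * (w - m))).div (hasDerivAt_sub_mul_exp_neg t) hD).congr_deriv ?_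
  rw [show w3m w m t = w3p w m t - (w - m) by linarith [w3p_sub_w3m hD], w3p, b3]
  rw [exp_neg_four_mul_mul] at hD ⊢
  set F := exp (-(2 * (w - m) * t))
  field_simp
  ring

end

theorem stmt_3_general (w m b0 : ℝ) (hm : 0 < m)
    (hconstraint : w * m = 4 * b0 ^ 2) (hδ : 0 < w - m) :
    w3m w m 0 = m ∧ w3p w m 0 = w ∧ (b3 w m b0 0) ^ 2 = b0 ^ 2 ∧
      ∀ t ∈ Set.Ici (0 : ℝ),
        (b3 w m b0 t) ^ 2 =
            b0 ^ 2 * (w - m) ^ 2 * Real.exp (-(4 * t * (w - m))) /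
              (w - m * Real.exp (-(4 * t * (w - m)))) ^ 2 ∧
          HasDerivAt (w3m w m) (-16 * (b3 w m b0 t) ^ 2) t ∧
          HasDerivAt (w3p w m) (-16 * (b3 w m b0 t) ^ 2) t ∧
          HasDerivAt (b3 w m b0) (-2 * (w3m w m t + w3p w m t) * b3 w m b0 t) t := by
  refine ⟨w3m_zero hδ.ne', w3p_zero hδ.ne', b3_zero_sq b0 hδ.ne', fun t ht => ?_⟩
  have hD := (sub_mul_exp_neg_pos hm.le hδ ht).ne'
  have hw3p : HasDerivAt (w3p w m) (-16 * b3 w m b0 t ^ 2) t := by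
    rw [neg_sixteen_mul_b3_sq hconstraint]
    exact hasDerivAt_w3p hD
  exact ⟨b3_sq b0 t, hasDerivAt_w3m hD hw3p, hw3p, hasDerivAt_b3 b0 hD⟩

/-- Example of the flow when `ω₊⁰ω₋⁰ = 4(b⁰)²` and `δ := ω₊⁰ − ω₋⁰ > 0`: the explicit
functions `w3m`, `w3p`, `b3` solve `∂ₜω₋ = −16b²`, `∂ₜω₊ = −16b²`, `∂ₜb = −2(ω₋+ω₊)b`
on `[0,∞)` with the given initial data. -/
theorem stmt_3 (w m b0 : ℝ) (hm : 0 < m) (hwm : m ≤ w)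
    (hconstraint : w * m = 4 * b0 ^ 2) (hδ : 0 < w - m) :
    w3m w m 0 = m ∧ w3p w m 0 = w ∧ (b3 w m b0 0) ^ 2 = b0 ^ 2 ∧
      ∀ t ∈ Set.Ici (0 : ℝ),
        (b3 w m b0 t) ^ 2 =
            b0 ^ 2 * (w - m) ^ 2 * Real.exp (-(4 * t * (w - m))) /
              (w - m * Real.exp (-(4 * t * (w - m)))) ^ 2 ∧
          HasDerivAt (w3m w m) (-16 * (b3 w m b0 t) ^ 2) t ∧
          HasDerivAt (w3p w m) (-16 * (b3 w m b0 t) ^ 2) t ∧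
          HasDerivAt (b3 w m b0) (-2 * (w3m w m t + w3p w m t) * b3 w m b0 t) t :=
  stmt_3_general w m b0 hm hconstraint hδ
end

section
/- Let h be a separable complex Hilbert space realized as L²(A, da), κ a positive self-adjoint multiplication operator (with κ ≥ 0 invertible on the relevant range), and Y = Yᵗ a Hilbert–Schmidt operator. Let Θ := 1 + dΓ(κ) act on the bosonic Fock space over h, and 𝕐 := Σ_{k,ℓ} Y_{kℓ} a_k a_ℓ the associated annihilation-quadratic operator. Then ‖𝕐 Θ⁻¹‖_op ≤ ‖κ^{−1/2} Y (κᵗ)^{−1/2}‖₂. -/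
open scoped InnerProductSpace

/-- Relative bound of an annihilation-quadratic operator `𝕐 = Σ_{k,ℓ} Y_{kℓ} a_k a_ℓ`
with respect to `Θ = 1 + dΓ(κ)`, for a positive (diagonal) multiplication operator `κ`
and a symmetric matrix `Y = Yᵗ`: in any representation of the CCR with creation operators
`c_k` adjoint to the annihilation operators `a_k`,
`‖𝕐 φ‖ ≤ ‖κ^{−1/2} Y (κᵗ)^{−1/2}‖₂ · ‖Θ φ‖`, i.e. `‖𝕐 Θ⁻¹‖ ≤ ‖κ^{−1/2} Y (κᵗ)^{−1/2}‖₂`. -/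
theorem stmt_15 {ι F : Type*} [Fintype ι] [DecidableEq ι] [NormedAddCommGroup F] [InnerProductSpace ℂ F]
    (a c : ι → Module.End ℂ F)
    (hadj : ∀ (k : ι) (x y : F), ⟪c k x, y⟫_ℂ = ⟪x, a k y⟫_ℂ)
    (hccr : ∀ k l : ι, a k * c l - c l * a k = ((if k = l then 1 else 0 : ℂ)) • 1)
    (haa : ∀ k l : ι, a k * a l = a l * a k)
    (hcc : ∀ k l : ι, c k * c l = c l * c k)
    (κ : ι → ℝ) (hκ : ∀ k, 0 < κ k)
    (Y : Matrix ι ι ℂ) (hYsymm : Y.transpose = Y) :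
    ∀ φ : F,
      ‖(∑ k, ∑ l, Y k l • (a k * a l)) φ‖ ≤
        Real.sqrt (∑ k, ∑ l, ‖Y k l‖ ^ 2 / (κ k * κ l)) *
          ‖((1 : Module.End ℂ F) + ∑ k, (κ k : ℂ) • (c k * a k)) φ‖ := by
  intro φ
  classical
  -- adjoint in the other slot
  have h1 : ∀ (k : ι) (x y : F), ⟪x, c k y⟫_ℂ = ⟪a k x, y⟫_ℂ := by
    intro k x y
    rw [← inner_conj_symm, hadj, inner_conj_symm]
  -- commutation applied to vectors
  have hComm : ∀ (k l : ι) (x : F),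
      a k (c l x) = c l (a k x) + (if k = l then 1 else 0 : ℂ) • x := by
    intro k l x
    have h := DFunLike.congr_fun (hccr k l) x
    simp only [LinearMap.sub_apply, Module.End.mul_apply, LinearMap.smul_apply,
      Module.End.one_apply] at h
    linear_combination (norm := module) h
  have hAsymm : ∀ k l : ι, a k (a l φ) = a l (a k φ) := by
    intro k l
    have h := DFunLike.congr_fun (haa k l) φ
    simpa [Module.End.mul_apply] using h
  set u : F := ∑ k, (κ k : ℂ) • (c k (a k φ)) with hu
  -- the applied operators
  have happ : (∑ k, ∑ l, Y k l • (a k * a l)) φ = ∑ k, ∑ l, Y k l • (a k (a l φ)) := by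
    simp [LinearMap.sum_apply, Module.End.mul_apply]
  have happΘ : ((1 : Module.End ℂ F) + ∑ k, (κ k : ℂ) • (c k * a k)) φ = φ + u := by
    simp [hu, LinearMap.add_apply, LinearMap.sum_apply, Module.End.mul_apply]
  -- key inner product computation
  have hkey : ∀ k l : ι, ⟪c k (a k φ), c l (a l φ)⟫_ℂ
      = (‖a l (a k φ)‖ ^ 2 : ℝ) + (if k = l then 1 else 0 : ℂ) * ⟪a k φ, a l φ⟫_ℂ := by
    intro k l
    rw [hadj, hComm k l, inner_add_right, inner_smul_right, h1, hAsymm k l,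
      inner_self_eq_norm_sq_to_K]
    norm_cast
  -- S := the weighted sum of double annihilations
  set S : ℝ := ∑ k, ∑ l, (κ k * κ l) * ‖a k (a l φ)‖ ^ 2 with hS
  have hS_nonneg : 0 ≤ S := by
    apply Finset.sum_nonneg; intro k _; apply Finset.sum_nonneg; intro l _
    exact mul_nonneg (mul_nonneg (hκ k).le (hκ l).le) (sq_nonneg _)
  -- ‖u‖² ≥ S
  have hu_inner : ⟪u, u⟫_ℂ = ∑ k, ∑ l, ((κ k * κ l : ℝ) : ℂ) *
      (((‖a l (a k φ)‖ ^ 2 : ℝ) : ℂ) + (if k = l then 1 else 0 : ℂ) * ⟪a k φ, a l φ⟫_ℂ) := by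
    rw [hu, sum_inner]
    refine Finset.sum_congr rfl fun k _ => ?_
    rw [inner_smul_left, inner_sum]
    rw [Finset.mul_sum]
    refine Finset.sum_congr rfl fun l _ => ?_
    rw [inner_smul_right, hkey k l]
    push_cast
    ring_nf
    rw [Complex.conj_ofReal]
    ring
  have hu_ge : S ≤ ‖u‖ ^ 2 := by
    have : (‖u‖ ^ 2 : ℝ) = (⟪u, u⟫_ℂ).re := by
      rw [inner_self_eq_norm_sq_to_K]; norm_cast
    rw [this, hu_inner, Complex.re_sum]
    refine Finset.sum_le_sum fun k _ => ?_
    rw [Complex.re_sum]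
    refine Finset.sum_le_sum fun l _ => ?_
    rw [Complex.re_ofReal_mul, Complex.add_re, Complex.ofReal_re]
    have h2 : 0 ≤ ((if k = l then 1 else 0 : ℂ) * ⟪a k φ, a l φ⟫_ℂ).re := by
      by_cases h : k = l
      · subst h
        have he : ((if k = k then 1 else 0 : ℂ) * ⟪a k φ, a k φ⟫_ℂ)
            = ((‖a k φ‖ ^ 2 : ℝ) : ℂ) := by
          rw [if_pos rfl, one_mul, inner_self_eq_norm_sq_to_K]; norm_cast
        rw [he, Complex.ofReal_re]
        positivity
      · simp [h]
    have h3 : 0 ≤ κ k * κ l := le_of_lt (mul_pos (hκ k) (hκ l))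
    have h4 : ‖a k (a l φ)‖ = ‖a l (a k φ)‖ := by rw [hAsymm]
    rw [h4]
    nlinarith [h2, h3]
  -- ⟪φ, u⟫ has nonneg real part
  have hφu : 0 ≤ (⟪φ, u⟫_ℂ).re := by
    rw [hu, inner_sum, Complex.re_sum]
    refine Finset.sum_nonneg fun k _ => ?_
    rw [inner_smul_right]
    have h5 : ⟪φ, c k (a k φ)⟫_ℂ = ((‖a k φ‖ ^ 2 : ℝ) : ℂ) := by
      rw [h1, inner_self_eq_norm_sq_to_K]; norm_cast
    rw [h5, ← Complex.ofReal_mul, Complex.ofReal_re]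
    exact mul_nonneg (hκ k).le (sq_nonneg _)
  -- ‖Θφ‖² ≥ ‖u‖²
  have hΘ_ge : ‖u‖ ^ 2 ≤ ‖φ + u‖ ^ 2 := by
    rw [norm_add_sq (𝕜 := ℂ)]
    have h0 : (0:ℝ) ≤ ‖φ‖ ^ 2 := by positivity
    have h6 : 0 ≤ RCLike.re ⟪φ, u⟫_ℂ := hφu
    nlinarith [h6, h0]
  -- hence sqrt S ≤ ‖φ + u‖
  have hsqrtS : Real.sqrt S ≤ ‖φ + u‖ := by
    have : S ≤ ‖φ + u‖ ^ 2 := le_trans hu_ge hΘ_ge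
    calc Real.sqrt S ≤ Real.sqrt (‖φ + u‖ ^ 2) := Real.sqrt_le_sqrt this
      _ = ‖φ + u‖ := by rw [Real.sqrt_sq (norm_nonneg _)]
  -- triangle inequality + Cauchy–Schwarz
  have htri : ‖(∑ k, ∑ l, Y k l • (a k * a l)) φ‖ ≤ ∑ k, ∑ l, ‖Y k l‖ * ‖a k (a l φ)‖ := by
    rw [happ]
    refine le_trans (norm_sum_le _ _) (Finset.sum_le_sum fun k _ => ?_)
    refine le_trans (norm_sum_le _ _) (Finset.sum_le_sum fun l _ => ?_)
    rw [norm_smul]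
  set C : ℝ := Real.sqrt (∑ k, ∑ l, ‖Y k l‖ ^ 2 / (κ k * κ l)) with hC
  have hCS : ∑ k, ∑ l, ‖Y k l‖ * ‖a k (a l φ)‖ ≤ C * Real.sqrt S := by
    have hfg : ∀ p : ι × ι, ‖Y p.1 p.2‖ * ‖a p.1 (a p.2 φ)‖ =
        (‖Y p.1 p.2‖ / Real.sqrt (κ p.1 * κ p.2)) *
          (Real.sqrt (κ p.1 * κ p.2) * ‖a p.1 (a p.2 φ)‖) := by
      intro p
      have hs : Real.sqrt (κ p.1 * κ p.2) ≠ 0 :=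
        ne_of_gt (Real.sqrt_pos.mpr (mul_pos (hκ p.1) (hκ p.2)))
      field_simp
    have key := Finset.sum_mul_sq_le_sq_mul_sq Finset.univ
      (fun p : ι × ι => ‖Y p.1 p.2‖ / Real.sqrt (κ p.1 * κ p.2))
      (fun p : ι × ι => Real.sqrt (κ p.1 * κ p.2) * ‖a p.1 (a p.2 φ)‖)
    have e1 : ∑ k, ∑ l, ‖Y k l‖ * ‖a k (a l φ)‖
        = ∑ p : ι × ι, (‖Y p.1 p.2‖ / Real.sqrt (κ p.1 * κ p.2)) *
          (Real.sqrt (κ p.1 * κ p.2) * ‖a p.1 (a p.2 φ)‖) := by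
      rw [show (∑ k, ∑ l, ‖Y k l‖ * ‖a k (a l φ)‖)
          = ∑ p : ι × ι, ‖Y p.1 p.2‖ * ‖a p.1 (a p.2 φ)‖ from
        (Fintype.sum_prod_type (f := fun p : ι × ι => ‖Y p.1 p.2‖ * ‖a p.1 (a p.2 φ)‖)).symm]
      exact Finset.sum_congr rfl fun p _ => hfg p
    have e2 : ∑ p : ι × ι, (‖Y p.1 p.2‖ / Real.sqrt (κ p.1 * κ p.2)) ^ 2
        = ∑ k, ∑ l, ‖Y k l‖ ^ 2 / (κ k * κ l) := by
      rw [show (∑ k, ∑ l, ‖Y k l‖ ^ 2 / (κ k * κ l))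
          = ∑ p : ι × ι, ‖Y p.1 p.2‖ ^ 2 / (κ p.1 * κ p.2) from
        (Fintype.sum_prod_type (f := fun p : ι × ι => ‖Y p.1 p.2‖ ^ 2 / (κ p.1 * κ p.2))).symm]
      refine Finset.sum_congr rfl fun p _ => ?_
      rw [div_pow, Real.sq_sqrt (le_of_lt (mul_pos (hκ p.1) (hκ p.2)))]
    have e3 : ∑ p : ι × ι, (Real.sqrt (κ p.1 * κ p.2) * ‖a p.1 (a p.2 φ)‖) ^ 2 = S := by
      rw [hS, show (∑ k, ∑ l, (κ k * κ l) * ‖a k (a l φ)‖ ^ 2)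
          = ∑ p : ι × ι, (κ p.1 * κ p.2) * ‖a p.1 (a p.2 φ)‖ ^ 2 from
        (Fintype.sum_prod_type (f := fun p : ι × ι => (κ p.1 * κ p.2) * ‖a p.1 (a p.2 φ)‖ ^ 2)).symm]
      refine Finset.sum_congr rfl fun p _ => ?_
      rw [mul_pow, Real.sq_sqrt (le_of_lt (mul_pos (hκ p.1) (hκ p.2)))]
    rw [e1]
    have hnn : 0 ≤ ∑ p : ι × ι, (‖Y p.1 p.2‖ / Real.sqrt (κ p.1 * κ p.2)) *
        (Real.sqrt (κ p.1 * κ p.2) * ‖a p.1 (a p.2 φ)‖) := by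
      refine Finset.sum_nonneg fun p _ => ?_
      exact mul_nonneg (div_nonneg (norm_nonneg _) (Real.sqrt_nonneg _))
        (mul_nonneg (Real.sqrt_nonneg _) (norm_nonneg _))
    have hnn2 : 0 ≤ ∑ p : ι × ι, (‖Y p.1 p.2‖ / Real.sqrt (κ p.1 * κ p.2)) ^ 2 :=
      Finset.sum_nonneg fun p _ => sq_nonneg _
    have hsq := Real.sqrt_le_sqrt key
    rw [Real.sqrt_sq hnn, Real.sqrt_mul hnn2, e2, e3] at hsq
    exact hsq
  rw [happΘ]
  exact le_trans htri (le_trans hCS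
    (mul_le_mul_of_nonneg_left hsqrtS (Real.sqrt_nonneg _)))
end

section
/- Let u, v be bounded operators on a Hilbert space h with conjugation, and suppose that the operator family ã_k := Σ_ℓ u_{kℓ} a_ℓ + v_{kℓ} a_ℓ* (k ∈ ℕ) together with its adjoints satisfies the canonical commutation relations [ã_k, ã_ℓ*] = δ_{kℓ}, [ã_k, ã_ℓ] = 0. Then u u* − v v* = 1 and u vᵗ = v uᵗ. -/
open scoped ComplexConjugate

lemma aux_comm_expand {ι R : Type*} [Fintype ι] [Ring R] [Algebra ℂ R]
    (α β : ι → ℂ) (X Y : ι → R) :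
    (∑ m, α m • X m) * (∑ n, β n • Y n) - (∑ n, β n • Y n) * (∑ m, α m • X m)
      = ∑ m, ∑ n, (α m * β n) • (X m * Y n - Y n * X m) := by
  rw [Finset.sum_mul_sum, Finset.sum_mul_sum,
    show (∑ i, ∑ j, β i • Y i * α j • X j) = ∑ j, ∑ i, β i • Y i * α j • X j from
      Finset.sum_comm]
  rw [← Finset.sum_sub_distrib]
  refine Finset.sum_congr rfl fun m _ => ?_
  rw [← Finset.sum_sub_distrib]
  refine Finset.sum_congr rfl fun n _ => ?_
  rw [smul_sub, smul_mul_assoc, smul_mul_assoc, mul_smul_comm, mul_smul_comm,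
    smul_smul, smul_smul, mul_comm (β n) (α m)]

lemma aux_eval_delta {ι R : Type*} [Fintype ι] [DecidableEq ι] [Ring R] [Algebra ℂ R]
    (γ : ι → ι → ℂ) :
    (∑ m, ∑ n, γ m n • (algebraMap ℂ R (if m = n then 1 else 0)))
      = algebraMap ℂ R (∑ m, γ m m) := by
  rw [map_sum]
  refine Finset.sum_congr rfl fun m _ => ?_
  rw [Finset.sum_eq_single m]
  · rw [if_pos rfl, map_one, Algebra.algebraMap_eq_smul_one]
  · intro n _ hn
    rw [if_neg (Ne.symm hn), map_zero, smul_zero]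
  · intro h; exact absurd (Finset.mem_univ m) h

lemma aux_eval_zero {ι R : Type*} [Fintype ι] [Ring R] [Algebra ℂ R]
    (γ : ι → ι → ℂ) (X Y : ι → R) (h : ∀ m n, X m * Y n = Y n * X m) :
    (∑ m, ∑ n, γ m n • (X m * Y n - Y n * X m)) = 0 := by
  simp [h]

/-- If the transformed operators `ã_k = Σ_ℓ u_{kℓ} a_ℓ + v_{kℓ} c_ℓ` (with formal adjoints
`ã_k* = Σ_ℓ ū_{kℓ} c_ℓ + v̄_{kℓ} a_ℓ`) satisfy the canonical commutation relations, then
`u u* − v v* = 1` and `u vᵗ = v uᵗ`. -/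
theorem stmt_17 {ι R : Type*} [Fintype ι] [DecidableEq ι] [Ring R] [Algebra ℂ R]
    (hinj : Function.Injective (algebraMap ℂ R))
    (a c : ι → R)
    (hac : ∀ k l : ι, a k * c l - c l * a k = algebraMap ℂ R (if k = l then 1 else 0))
    (haa : ∀ k l : ι, a k * a l = a l * a k)
    (hcc : ∀ k l : ι, c k * c l = c l * c k)
    (u v : Matrix ι ι ℂ)
    (hCCR1 : ∀ k l : ι,
      (∑ m, (u k m • a m + v k m • c m)) * (∑ m, (conj (u l m) • c m + conj (v l m) • a m)) -
          (∑ m, (conj (u l m) • c m + conj (v l m) • a m)) *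
            (∑ m, (u k m • a m + v k m • c m)) =
        algebraMap ℂ R (if k = l then 1 else 0))
    (hCCR2 : ∀ k l : ι,
      (∑ m, (u k m • a m + v k m • c m)) * (∑ m, (u l m • a m + v l m • c m)) =
        (∑ m, (u l m • a m + v l m • c m)) * (∑ m, (u k m • a m + v k m • c m))) :
    u * u.conjTranspose - v * v.conjTranspose = 1 ∧ u * v.transpose = v * u.transpose := by
  have hca : ∀ k l : ι, c k * a l - a l * c k = algebraMap ℂ R (-(if l = k then 1 else 0)) := by
    intro k l
    rw [map_neg, ← hac l k, neg_sub]
  have key1 : ∀ k l : ι,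
      (∑ m, (u k m * conj (u l m) - v k m * conj (v l m))) = if k = l then 1 else 0 := by
    intro k l
    apply hinj
    rw [← hCCR1 k l]
    have h1 := hCCR1 k l
    set S1 : R := ∑ m, u k m • a m with hS1
    set S2 : R := ∑ m, v k m • c m with hS2
    set T1 : R := ∑ m, conj (u l m) • c m with hT1
    set T2 : R := ∑ m, conj (v l m) • a m with hT2
    have hsplitS : (∑ m, (u k m • a m + v k m • c m)) = S1 + S2 := Finset.sum_add_distrib
    have hsplitT : (∑ m, (conj (u l m) • c m + conj (v l m) • a m)) = T1 + T2 :=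
      Finset.sum_add_distrib
    rw [hsplitS, hsplitT]
    have e1 : S1 * T1 - T1 * S1 = algebraMap ℂ R (∑ m, u k m * conj (u l m)) := by
      rw [hS1, hT1, aux_comm_expand]
      simp only [hac]
      exact aux_eval_delta _
    have e2 : S1 * T2 - T2 * S1 = 0 := by
      rw [hS1, hT2, aux_comm_expand]
      exact aux_eval_zero _ _ _ haa
    have e3 : S2 * T1 - T1 * S2 = 0 := by
      rw [hS2, hT1, aux_comm_expand]
      exact aux_eval_zero _ _ _ hcc
    have e4 : S2 * T2 - T2 * S2 = algebraMap ℂ R (-∑ m, v k m * conj (v l m)) := by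
      rw [hS2, hT2, aux_comm_expand]
      simp only [hca]
      have := aux_eval_delta (R := R) (fun m n => -(v k m * conj (v l n)))
      simp only [neg_smul] at this ⊢
      rw [show (∑ m, ∑ n, (v k m * conj (v l n)) • algebraMap ℂ R (-(if n = m then 1 else 0)))
          = ∑ m, ∑ n, -((v k m * conj (v l n)) • algebraMap ℂ R (if m = n then 1 else 0)) from ?_]
      · rw [this]; congr 1; rw [← Finset.sum_neg_distrib]
      · refine Finset.sum_congr rfl fun m _ => Finset.sum_congr rfl fun n _ => ?_
        rw [map_neg, smul_neg]
        congr 2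
        simp [eq_comm]
    have expand : (S1 + S2) * (T1 + T2) - (T1 + T2) * (S1 + S2)
        = (S1 * T1 - T1 * S1) + (S1 * T2 - T2 * S1) + (S2 * T1 - T1 * S2)
          + (S2 * T2 - T2 * S2) := by noncomm_ring
    rw [expand, e1, e2, e3, e4, add_zero, add_zero, ← map_add]
    congr 1
    rw [Finset.sum_sub_distrib]
    ring
  have key2 : ∀ k l : ι, (∑ m, (u k m * v l m - v k m * u l m)) = 0 := by
    intro k l
    apply hinj
    rw [map_zero, ← sub_eq_zero.mpr (hCCR2 k l)]
    set S1 : R := ∑ m, u k m • a m with hS1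
    set S2 : R := ∑ m, v k m • c m with hS2
    set T1 : R := ∑ m, u l m • a m with hT1
    set T2 : R := ∑ m, v l m • c m with hT2
    have hsplitS : (∑ m, (u k m • a m + v k m • c m)) = S1 + S2 := Finset.sum_add_distrib
    have hsplitT : (∑ m, (u l m • a m + v l m • c m)) = T1 + T2 := Finset.sum_add_distrib
    rw [hsplitS, hsplitT]
    have e1 : S1 * T1 - T1 * S1 = 0 := by
      rw [hS1, hT1, aux_comm_expand]; exact aux_eval_zero _ _ _ haa
    have e2 : S1 * T2 - T2 * S1 = algebraMap ℂ R (∑ m, u k m * v l m) := by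
      rw [hS1, hT2, aux_comm_expand]
      simp only [hac]
      exact aux_eval_delta _
    have e3 : S2 * T1 - T1 * S2 = algebraMap ℂ R (-∑ m, v k m * u l m) := by
      rw [hS2, hT1, aux_comm_expand]
      simp only [hca]
      have := aux_eval_delta (R := R) (fun m n => -(v k m * u l n))
      simp only [neg_smul] at this ⊢
      rw [show (∑ m, ∑ n, (v k m * u l n) • algebraMap ℂ R (-(if n = m then 1 else 0)))
          = ∑ m, ∑ n, -((v k m * u l n) • algebraMap ℂ R (if m = n then 1 else 0)) from ?_]
      · rw [this]; congr 1; rw [← Finset.sum_neg_distrib]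
      · refine Finset.sum_congr rfl fun m _ => Finset.sum_congr rfl fun n _ => ?_
        rw [map_neg, smul_neg]
        congr 2
        simp [eq_comm]
    have e4 : S2 * T2 - T2 * S2 = 0 := by
      rw [hS2, hT2, aux_comm_expand]; exact aux_eval_zero _ _ _ hcc
    have expand : (S1 + S2) * (T1 + T2) - (T1 + T2) * (S1 + S2)
        = (S1 * T1 - T1 * S1) + (S1 * T2 - T2 * S1) + (S2 * T1 - T1 * S2)
          + (S2 * T2 - T2 * S2) := by noncomm_ring
    rw [expand, e1, e2, e3, e4, zero_add, add_zero, ← map_add]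
    congr 1
    rw [Finset.sum_sub_distrib]
    ring
  constructor
  · ext k l
    have := key1 k l
    rw [Finset.sum_sub_distrib] at this
    simp only [Matrix.sub_apply, Matrix.mul_apply, Matrix.conjTranspose_apply, Matrix.one_apply]
    simpa [RCLike.star_def] using this
  · ext k l
    have := key2 k l
    rw [Finset.sum_sub_distrib, sub_eq_zero] at this
    simp only [Matrix.mul_apply, Matrix.transpose_apply]
    exact this
end
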